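/- Let G be a finite parity game, i ∈ {0,1} a player, σᵢ a positional strategy for player i, and p a position. Consider the subgraph G_σ obtained from the game graph by removing, from every position p′ ∈ Posᵢ, all outgoing edges except the one chosen by σᵢ. Then σᵢ is a winning strategy for player i from p if and only if there is no cycle in G_σ reachable from p whose largest priority has parity 1−i. -/

import Mathlib

set_option maxHeartbeats 1000000

namespace MuCalc

attribute [local instance] Classical.propDecidable

/-- μ-calculus formulas. -/
inductive Formula (Var : Type*) (Prp : Type*) (Act : Type*) where
  | var : Var → Formula Var Prp Act
  | prop : Prp → Formula Var Prp Act
  | dia : Act → Formula Var Prp Act → Formula Var Prp Act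
  | box : Act → Formula Var Prp Act → Formula Var Prp Act
  | and : Formula Var Prp Act → Formula Var Prp Act → Formula Var Prp Act
  | or : Formula Var Prp Act → Formula Var Prp Act → Formula Var Prp Act
  | mu : Var → Formula Var Prp Act → Formula Var Prp Act
  | nu : Var → Formula Var Prp Act → Formula Var Prp Act

namespace Formula

variable {Var Prp Act : Type*}

/-- Free variables. -/
noncomputable def FV : Formula Var Prp Act → Finset Var
  | var X => {X}
  | prop _ => ∅
  | dia _ φ => FV φ
  | box _ φ => FV φ
  | and φ ψ => FV φ ∪ FV ψ
  | or φ ψ => FV φ ∪ FV ψ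
  | mu X φ => FV φ \ {X}
  | nu X φ => FV φ \ {X}

/-- Substitution of a formula for the free occurrences of a variable. -/
noncomputable def subst : Formula Var Prp Act → Var → Formula Var Prp Act → Formula Var Prp Act
  | var Y, X, ρ => if Y = X then ρ else var Y
  | prop P, _, _ => prop P
  | dia a φ, X, ρ => dia a (subst φ X ρ)
  | box a φ, X, ρ => box a (subst φ X ρ)
  | and φ ψ, X, ρ => and (subst φ X ρ) (subst ψ X ρ)
  | or φ ψ, X, ρ => or (subst φ X ρ) (subst ψ X ρ)
  | mu Y φ, X, ρ => if Y = X then mu Y φ else mu Y (subst φ X ρ)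
  | nu Y φ, X, ρ => if Y = X then nu Y φ else nu Y (subst φ X ρ)

/-- Nesting depth `nd(X, φ)` of a variable in a formula. -/
noncomputable def ndVar (X : Var) : Formula Var Prp Act → ℕ
  | var _ => 0
  | prop _ => 0
  | dia _ φ => ndVar X φ
  | box _ φ => ndVar X φ
  | and φ ψ => max (ndVar X φ) (ndVar X ψ)
  | or φ ψ => max (ndVar X φ) (ndVar X ψ)
  | mu Y φ => if X ≠ Y ∧ X ∈ FV φ then max (1 + ndVar Y φ) (ndVar X φ) else 0
  | nu Y φ => if X ≠ Y ∧ X ∈ FV φ then max (1 + ndVar Y φ) (ndVar X φ) else 0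

/-- Nesting depth `nd(φ)` of a formula: `nd(QX.φ) = 1 + nd(X,φ)` and `0` otherwise. -/
noncomputable def nd : Formula Var Prp Act → ℕ
  | mu X φ => 1 + ndVar X φ
  | nu X φ => 1 + ndVar X φ
  | _ => 0

/-- The dual of a formula. -/
def dual : Formula Var Prp Act → Formula Var Prp Act
  | var X => var X
  | prop P => prop P
  | dia a φ => box a (dual φ)
  | box a φ => dia a (dual φ)
  | and φ ψ => or (dual φ) (dual ψ)
  | or φ ψ => and (dual φ) (dual ψ)
  | mu X φ => nu X (dual φ)
  | nu X φ => mu X (dual φ)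

/-- A fixpoint formula `QX.φ` with `Q ∈ {μ, ν}`: `fp true = μ`, `fp false = ν`. -/
def fp (q : Bool) (X : Var) (φ : Formula Var Prp Act) : Formula Var Prp Act :=
  if q then mu X φ else nu X φ

/-- The (reflexive, transitive) subformula relation. -/
inductive Subformula : Formula Var Prp Act → Formula Var Prp Act → Prop
  | refl (φ) : Subformula φ φ
  | dia {ρ φ} (a : Act) : Subformula ρ φ → Subformula ρ (dia a φ)
  | box {ρ φ} (a : Act) : Subformula ρ φ → Subformula ρ (box a φ)
  | and_left {ρ φ ψ} : Subformula ρ φ → Subformula ρ (and φ ψ)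
  | and_right {ρ φ ψ} : Subformula ρ ψ → Subformula ρ (and φ ψ)
  | or_left {ρ φ ψ} : Subformula ρ φ → Subformula ρ (or φ ψ)
  | or_right {ρ φ ψ} : Subformula ρ ψ → Subformula ρ (or φ ψ)
  | mu {ρ φ} (X : Var) : Subformula ρ φ → Subformula ρ (mu X φ)
  | nu {ρ φ} (X : Var) : Subformula ρ φ → Subformula ρ (nu X φ)

end Formula

/-- A labelled transition system: a family of total transition relations and
a labelling of states with the atomic propositions true there. -/
structure LTS (S : Type*) (Prp : Type*) (Act : Type*) where
  trans : Act → S → S → Prop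
  total : ∀ a s, ∃ t, trans a s t
  label : S → Set Prp

variable {S Var Prp Act : Type*}

/-- The semantics `⟦φ⟧η ⊆ S`, with least/greatest fixpoints given by Knaster–Tarski. -/
noncomputable def LTS.sem (T : LTS S Prp Act) :
    Formula Var Prp Act → (Var → Set S) → Set S
  | .var X, η => η X
  | .prop P, _ => {s | P ∈ T.label s}
  | .dia a φ, η => {s | ∃ t, T.trans a s t ∧ t ∈ T.sem φ η}
  | .box a φ, η => {s | ∀ t, T.trans a s t → t ∈ T.sem φ η}
  | .and φ ψ, η => T.sem φ η ∩ T.sem ψ η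
  | .or φ ψ, η => T.sem φ η ∪ T.sem ψ η
  | .mu X φ, η => sInf {U : Set S | T.sem φ (Function.update η X U) ⊆ U}
  | .nu X φ, η => sSup {U : Set S | U ⊆ T.sem φ (Function.update η X U)}

/-- A parity game: positions owned by Player 0 and Player 1, a total edge
relation, and a priority function. -/
structure ParityGame (Pos : Type*) where
  owner : Pos → Fin 2
  edge : Pos → Pos → Prop
  total : ∀ p, ∃ q, edge p q
  priority : Pos → ℕ

namespace ParityGame

variable {Pos : Type*}

/-- A strategy for player `i`: given the history (the earlier positions of the
play, in order) and the current position, pick a move; all prescribed moves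
must follow edges when the current position belongs to player `i`. -/
structure Strategy (G : ParityGame Pos) (i : Fin 2) where
  move : List Pos → Pos → Pos
  valid : ∀ h p, G.owner p = i → G.edge p (move h p)

/-- A strategy is positional if its moves only depend on the current position. -/
def Strategy.Positional {G : ParityGame Pos} {i : Fin 2} (σ : G.Strategy i) : Prop :=
  ∀ h h' p, σ.move h p = σ.move h' p

/-- The play determined by a joint move function `f` (history, current ↦ next):
current position together with the history. -/
def playHist (f : List Pos → Pos → Pos) (p : Pos) : ℕ → Pos × List Pos
  | 0 => (p, [])
  | n + 1 =>
    let q := playHist f p n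
    (f q.2 q.1, q.2 ++ [q.1])

/-- The infinite play determined by a joint move function. -/
def play (f : List Pos → Pos → Pos) (p : Pos) (n : ℕ) : Pos :=
  (playHist f p n).1

/-- The joint move function of a strategy for player `i` and a counterstrategy. -/
def Strategy.combine {G : ParityGame Pos} {i : Fin 2} (σ : G.Strategy i)
    (τ : G.Strategy (1 - i)) : List Pos → Pos → Pos :=
  fun h p => if G.owner p = i then σ.move h p else τ.move h p

/-- An infinite sequence of positions is a play if successive positions follow edges. -/
def IsPlay (G : ParityGame Pos) (f : ℕ → Pos) : Prop :=
  ∀ n, G.edge (f n) (f (n + 1))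

/-- The largest priority occurring infinitely often in an infinite play. -/
noncomputable def maxInfPriority (G : ParityGame Pos) (f : ℕ → Pos) : ℕ :=
  sSup {k | {n | G.priority (f n) = k}.Infinite}

/-- Player `i` wins the infinite play `f`: the largest priority occurring
infinitely often has parity `i`. -/
def WinsPlaySeq (G : ParityGame Pos) (i : Fin 2) (f : ℕ → Pos) : Prop :=
  G.maxInfPriority f % 2 = i.val

/-- `σ` (for player `i`) wins the play from `p` against counterstrategy `τ`. -/
def Strategy.WinsAgainst {G : ParityGame Pos} {i : Fin 2} (σ : G.Strategy i)
    (τ : G.Strategy (1 - i)) (p : Pos) : Prop :=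
  G.WinsPlaySeq i (play (σ.combine τ) p)

/-- `σ` is a winning strategy for player `i` from position `p`. -/
def Strategy.WinsFrom {G : ParityGame Pos} {i : Fin 2} (σ : G.Strategy i) (p : Pos) : Prop :=
  ∀ τ : G.Strategy (1 - i), σ.WinsAgainst τ p

/-- Player `i` wins from position `p`. -/
def WinsFrom (G : ParityGame Pos) (i : Fin 2) (p : Pos) : Prop :=
  ∃ σ : G.Strategy i, σ.WinsFrom p

end ParityGame

/-- Ownership of positions in the game `G(T,η)`: opponent (Player 1) moves at
conjunctions and boxes, proponent (Player 0) everywhere else. -/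
def gameOwner : S × Formula Var Prp Act → Fin 2
  | (_, .and _ _) => 1
  | (_, .box _ _) => 1
  | _ => 0

/-- The moves of the game `G(T,η)`. -/
noncomputable def gameMove (T : LTS S Prp Act) :
    S × Formula Var Prp Act → S × Formula Var Prp Act → Prop
  | (s, .or φ ψ), q => q = (s, φ) ∨ q = (s, ψ)
  | (s, .and φ ψ), q => q = (s, φ) ∨ q = (s, ψ)
  | (s, .dia a φ), q => q.2 = φ ∧ T.trans a s q.1
  | (s, .box a φ), q => q.2 = φ ∧ T.trans a s q.1
  | (s, .mu X φ), q => q = (s, Formula.subst φ X (.mu X φ))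
  | (s, .nu X φ), q => q = (s, Formula.subst φ X (.nu X φ))
  | (s, .var X), q => q = (s, .var X)
  | (s, .prop P), q => q = (s, .prop P)

/-- The priorities of the game `G(T,η)`. -/
noncomputable def gamePriority (T : LTS S Prp Act) (η : Var → Set S) :
    S × Formula Var Prp Act → ℕ
  | (_, .mu X φ) => 2 * Formula.nd (Formula.mu X φ) + 1
  | (_, .nu X φ) => 2 * Formula.nd (Formula.nu X φ)
  | (s, .prop P) => if P ∈ T.label s then 0 else 1
  | (s, .var X) => if s ∈ η X then 0 else 1
  | (_, _) => 0

/-- The parity game `G(T,η)` associated with an LTS `T` and environment `η`. -/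
noncomputable def LTS.game (T : LTS S Prp Act) (η : Var → Set S) :
    ParityGame (S × Formula Var Prp Act) where
  owner := gameOwner
  edge := gameMove T
  total := by
    rintro ⟨s, φ⟩
    cases φ with
    | var X => exact ⟨(s, .var X), rfl⟩
    | prop P => exact ⟨(s, .prop P), rfl⟩
    | dia a φ => obtain ⟨t, ht⟩ := T.total a s; exact ⟨(t, φ), rfl, ht⟩
    | box a φ => obtain ⟨t, ht⟩ := T.total a s; exact ⟨(t, φ), rfl, ht⟩
    | and φ ψ => exact ⟨(s, φ), Or.inl rfl⟩
    | or φ ψ => exact ⟨(s, φ), Or.inl rfl⟩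
    | mu X φ => exact ⟨(s, Formula.subst φ X (.mu X φ)), rfl⟩
    | nu X φ => exact ⟨(s, Formula.subst φ X (.nu X φ)), rfl⟩
  priority := gamePriority T η

/-- The advice values `{1, 2, *} ∪ S` of a partial winning strategy. -/
inductive Advice (S : Type*) where
  | one : Advice S
  | two : Advice S
  | star : Advice S
  | state : S → Advice S

/-- A partial strategy: a partial function from positions of `G(T,η)` to advice. -/
def PStrat (S Var Prp Act : Type*) :=
  S × Formula Var Prp Act → Option (Advice S)

/-- The domain of a partial strategy. -/
def PStrat.dom (sg : PStrat S Var Prp Act) : Set (S × Formula Var Prp Act) :=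
  {q | sg q ≠ none}

/-- The move function of the Player-0 strategy induced by a partial strategy:
follow the advice where present (and sensible), move arbitrarily elsewhere. -/
noncomputable def inducedMove (T : LTS S Prp Act) (sg : PStrat S Var Prp Act) :
    S × Formula Var Prp Act → S × Formula Var Prp Act
  | (s, .var X) => (s, .var X)
  | (s, .prop P) => (s, .prop P)
  | (s, .and φ ψ) => (s, φ)
  | (s, .or φ ψ) => if sg (s, .or φ ψ) = some .two then (s, ψ) else (s, φ)
  | (s, .box a φ) => ((T.total a s).choose, φ)
  | (s, .dia a φ) =>
    if h : ∃ t, sg (s, .dia a φ) = some (.state t) ∧ T.trans a s t then (h.choose, φ)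
    else ((T.total a s).choose, φ)
  | (s, .mu X φ) => (s, Formula.subst φ X (.mu X φ))
  | (s, .nu X φ) => (s, Formula.subst φ X (.nu X φ))

/-- The Player-0 strategy induced by a partial strategy. -/
noncomputable def inducedStrategy (T : LTS S Prp Act) (η : Var → Set S)
    (sg : PStrat S Var Prp Act) : (T.game η).Strategy 0 where
  move := fun _ p => inducedMove T sg p
  valid := by
    rintro h ⟨s, φ⟩ _
    show gameMove T (s, φ) (inducedMove T sg (s, φ))
    cases φ with
    | var X => exact rfl
    | prop P => exact rfl
    | and φ ψ => exact Or.inl rfl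
    | or φ ψ =>
      show inducedMove T sg (s, .or φ ψ) = (s, φ) ∨ inducedMove T sg (s, .or φ ψ) = (s, ψ)
      rw [inducedMove]
      split
      · exact Or.inr rfl
      · exact Or.inl rfl
    | box a φ => exact ⟨rfl, (T.total a s).choose_spec⟩
    | dia a φ =>
      show (inducedMove T sg (s, .dia a φ)).2 = φ ∧ T.trans a s (inducedMove T sg (s, .dia a φ)).1
      rw [inducedMove]
      split
      next hh => exact ⟨rfl, hh.choose_spec.2⟩
      next => exact ⟨rfl, (T.total a s).choose_spec⟩
    | mu X φ => exact rfl
    | nu X φ => exact rfl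

/-- A partial winning strategy for the game `G(T,η)` (conditions STAR, OR, DIA, WIN). -/
structure IsPWS (T : LTS S Prp Act) (η : Var → Set S) (sg : PStrat S Var Prp Act) : Prop where
  star : ∀ s (φ : Formula Var Prp Act), sg (s, φ) = some .star →
    ∀ q, gameMove T (s, φ) q → sg q ≠ none
  or_one : ∀ s (φ : Formula Var Prp Act), sg (s, φ) = some .one →
    ∃ φ₁ φ₂, φ = Formula.or φ₁ φ₂ ∧ sg (s, φ₁) ≠ none
  or_two : ∀ s (φ : Formula Var Prp Act), sg (s, φ) = some .two →
    ∃ φ₁ φ₂, φ = Formula.or φ₁ φ₂ ∧ sg (s, φ₂) ≠ none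
  dia : ∀ s (φ : Formula Var Prp Act) t, sg (s, φ) = some (.state t) →
    ∃ a ψ, φ = Formula.dia a ψ ∧ T.trans a s t ∧ sg (t, ψ) ≠ none
  win : ∀ q ∈ PStrat.dom sg, (inducedStrategy T η sg).WinsFrom q

/-- The sum `Σ + Σ'` of two partial strategies, preferring the left one. -/
def pwsAdd (sg sg' : PStrat S Var Prp Act) : PStrat S Var Prp Act :=
  fun q => (sg q).orElse (fun _ => sg' q)

/-- The substitution-composition `Σ[X:=φ, Σ']` of partial strategies. -/
noncomputable def pwsSubst (sg : PStrat S Var Prp Act) (X : Var)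
    (φ : Formula Var Prp Act) (sg' : PStrat S Var Prp Act) : PStrat S Var Prp Act :=
  fun q =>
    (sg' q).orElse (fun _ =>
      if h : ∃ ψ, q.2 = Formula.subst ψ X φ ∧ sg (q.1, ψ) ≠ none
      then sg (q.1, h.choose) else none)

/-- The instrumented fixpoint iteration `SEM(φ)_η`, computing a partial
winning strategy by fixpoint iteration. -/
noncomputable def SEM [Fintype S] (T : LTS S Prp Act) :
    Formula Var Prp Act → (Var → Set S) → PStrat S Var Prp Act
  | .var X, η => fun q => if q.2 = Formula.var X ∧ q.1 ∈ η X then some .star else none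
  | .prop P, _ => fun q => if q.2 = Formula.prop P ∧ P ∈ T.label q.1 then some .star else none
  | .and φ ψ, η =>
    pwsAdd (SEM T φ η) (pwsAdd (SEM T ψ η)
      (fun q => if q.2 = Formula.and φ ψ ∧ SEM T φ η (q.1, φ) ≠ none ∧ SEM T ψ η (q.1, ψ) ≠ none
        then some .star else none))
  | .or φ ψ, η =>
    pwsAdd (SEM T φ η) (pwsAdd (SEM T ψ η) (pwsAdd
      (fun q => if q.2 = Formula.or φ ψ ∧ SEM T φ η (q.1, φ) ≠ none then some .one else none)
      (fun q => if q.2 = Formula.or φ ψ ∧ SEM T ψ η (q.1, ψ) ≠ none then some .two else none)))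
  | .box a φ, η =>
    pwsAdd (SEM T φ η)
      (fun q => if q.2 = Formula.box a φ ∧ ∀ t, T.trans a q.1 t → SEM T φ η (t, φ) ≠ none
        then some .star else none)
  | .dia a φ, η =>
    pwsAdd (SEM T φ η)
      (fun q =>
        if h : q.2 = Formula.dia a φ ∧ ∃ t, T.trans a q.1 t ∧ SEM T φ η (t, φ) ≠ none
        then some (.state h.2.choose) else none)
  | .mu X φ, η =>
    (fun sgn : PStrat S Var Prp Act =>
        pwsSubst (SEM T φ (Function.update η X {s | sgn (s, φ) ≠ none}))
          X (Formula.mu X φ) sgn)^[Fintype.card S + 1]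
      (fun _ => none)
  | .nu X φ, η =>
    let U := T.sem (Formula.nu X φ) η
    let sg := SEM T φ (Function.update η X U)
    fun q =>
      if q.2 = Formula.nu X φ ∧ q.1 ∈ U then some .star
      else if h : ∃ ψ, ψ ≠ Formula.var X ∧ q.2 = Formula.subst ψ X (Formula.nu X φ) ∧
          sg (q.1, ψ) ≠ none
      then sg (q.1, h.choose) else none


/-!
A play in which player `i` follows the positional strategy `σ` is the same thing as an infinite
path in `G_σ`. If a cycle of `G_σ` with largest priority of parity `1 - i` is reachable from `p`,
the opponent can walk there and then go round the cycle forever, so the largest priority seen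
infinitely often is that of the cycle. Conversely, since the game is finite, in any play some
position `x` carrying the largest infinitely recurring priority `k` recurs infinitely often, and
from some point on no priority exceeds `k`; the stretch between two late visits of `x` is a cycle
of `G_σ`, reachable from `p`, with largest priority `k`.
-/

section Sequences

variable {α : Type*} {R : α → α → Prop}

theorem _root_.List.foldr_max_le_iff {β : Type*} [LinearOrder β] {b c : β} {l : List β} :
    l.foldr max b ≤ c ↔ ∀ x ∈ b :: l, x ≤ c := by
  induction l with
  | nil => simp
  | cons a l ih =>
    simp only [List.foldr_cons, max_le_iff, ih, List.mem_cons, forall_eq_or_imp]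
    tauto

theorem _root_.List.le_foldr_max_of_mem_cons {β : Type*} [LinearOrder β] {x b : β} {l : List β}
    (hx : x ∈ b :: l) : x ≤ l.foldr max b :=
  List.foldr_max_le_iff.mp le_rfl x hx

theorem _root_.List.foldr_max_mem_cons {β : Type*} [LinearOrder β] (b : β) (l : List β) :
    l.foldr max b ∈ b :: l := by
  induction l with
  | nil => simp
  | cons a l ih =>
    rcases max_choice a (l.foldr max b) with h | h <;>
      simp only [List.foldr_cons, h, List.mem_cons] at ih ⊢ <;> tauto

theorem reflTransGen_of_forall_rel_succ {f : ℕ → α} (hf : ∀ n, R (f n) (f (n + 1))) (n : ℕ) :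
    Relation.ReflTransGen R (f 0) (f n) := by
  induction n with
  | zero => exact .refl
  | succ n ih => exact ih.tail (hf n)

theorem isChain_map_range' {f : ℕ → α} (hf : ∀ n, R (f n) (f (n + 1))) (a k : ℕ) :
    List.IsChain R ((List.range' a k).map f) :=
  List.isChain_map_of_isChain f (fun _ _ h => h ▸ hf _) (List.isChain_range' a k 1)

theorem _root_.Relation.ReflTransGen.exists_prepend_seq {p q : α}
    (h : Relation.ReflTransGen R p q) {g : ℕ → α} (hg0 : g 0 = q) (hg : ∀ n, R (g n) (g (n + 1))) :
    ∃ (m : ℕ) (f : ℕ → α), f 0 = p ∧ (∀ n, R (f n) (f (n + 1))) ∧ ∀ n, f (n + m) = g n := by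
  induction h using Relation.ReflTransGen.head_induction_on with
  | refl => exact ⟨0, g, hg0, hg, fun _ => rfl⟩
  | @head a _ hab _ ih =>
    obtain ⟨m, f, hf0, hf, hfm⟩ := ih
    refine ⟨m + 1, fun n => n.casesOn a f, rfl, ?_, fun n => hfm n⟩
    rintro (_ | n)
    · show R a (f 0)
      rwa [hf0]
    · exact hf n

def cycleSeq (q : α) (l : List α) (n : ℕ) : α :=
  (q :: l).getD (n % (l.length + 1)) q

theorem cycleSeq_zero (q : α) (l : List α) : cycleSeq q l 0 = q := by
  simp [cycleSeq]

theorem cycleSeq_mem (q : α) (l : List α) (n : ℕ) : cycleSeq q l n ∈ q :: l := by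
  rw [cycleSeq, List.getD_eq_getElem _ _ (by simpa using Nat.mod_lt n l.length.succ_pos)]
  exact List.getElem_mem _

theorem cycleSeq_rel {q : α} {l : List α} (h : List.IsChain R (q :: (l ++ [q]))) (n : ℕ) :
    R (cycleSeq q l n) (cycleSeq q l (n + 1)) := by
  have key : ∀ j, (hj : j ≤ l.length + 1) →
      (q :: (l ++ [q]))[j]'(by simp; omega) = cycleSeq q l j := by
    intro j hj
    rcases hj.lt_or_eq with hj | rfl
    · rw [cycleSeq, Nat.mod_eq_of_lt hj, List.getD_eq_getElem _ _ (by simpa using hj)]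
      grind
    · simp [cycleSeq]
  have hj : n % (l.length + 1) < l.length + 1 := Nat.mod_lt n l.length.succ_pos
  have hstep := h.getElem (n % (l.length + 1)) (by simp; omega)
  rw [key _ hj.le, key _ hj] at hstep
  simpa only [cycleSeq, Nat.succ_eq_add_one, Nat.mod_add_mod, Nat.mod_mod] using hstep

theorem frequently_cycleSeq_eq {q x : α} {l : List α} (hx : x ∈ q :: l) :
    ∃ᶠ n in Filter.atTop, cycleSeq q l n = x := by
  obtain ⟨j, hj, rfl⟩ := List.getElem_of_mem hx
  rw [List.length_cons] at hj
  refine Filter.frequently_atTop.mpr fun N => ⟨j + N * (l.length + 1), by nlinarith, ?_⟩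
  simp only [cycleSeq, Nat.add_mul_mod_self_right]
  rw [Nat.mod_eq_of_lt hj, List.getD_eq_getElem]

end Sequences

theorem mod_two_eq_iff_ne_one_sub (a : ℕ) (i : Fin 2) :
    a % 2 = i ↔ a % 2 ≠ ((1 - i : Fin 2) : ℕ) := by
  fin_cases i <;> simp

namespace ParityGame

open Filter

variable {Pos : Type*} (G : ParityGame Pos)

theorem maxInfPriority_eq_of_frequently_of_eventually {f : ℕ → Pos} {k : ℕ}
    (hfreq : ∃ᶠ n in atTop, G.priority (f n) = k) (hle : ∀ᶠ n in atTop, G.priority (f n) ≤ k) :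
    G.maxInfPriority f = k := by
  refine IsGreatest.csSup_eq ⟨Nat.frequently_atTop_iff_infinite.mp hfreq, fun k' hk' => ?_⟩
  obtain ⟨n, hn, rfl⟩ := (hle.and_frequently (Nat.frequently_atTop_iff_infinite.mpr hk')).exists
  exact hn

theorem exists_frequently_eq_maxInfPriority [Finite Pos] (f : ℕ → Pos) :
    ∃ x, G.priority x = G.maxInfPriority f ∧ (∃ᶠ n in atTop, f n = x) ∧
      ∀ᶠ n in atTop, G.priority (f n) ≤ G.maxInfPriority f := by
  unfold maxInfPriority
  set S := {k | {n | G.priority (f n) = k}.Infinite}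
  have hmem : ∀ {k}, k ∈ S ↔ ∃ᶠ n in atTop, G.priority (f n) = k :=
    Nat.frequently_atTop_iff_infinite.symm
  have hS_fin : S.Finite := (Set.finite_range G.priority).subset fun k hk => by
    obtain ⟨n, hn⟩ := Set.Infinite.nonempty hk
    exact ⟨f n, hn⟩
  have hS_ne : S.Nonempty := by
    obtain ⟨x, hx⟩ := frequently_exists.mp
      (Frequently.of_forall fun n => ⟨f n, rfl⟩ : ∃ᶠ n in atTop, ∃ x, f n = x)
    exact ⟨G.priority x, hmem.mpr (hx.mono fun n hn => hn ▸ rfl)⟩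
  obtain ⟨x, hx⟩ := frequently_exists.mp ((hmem.mp (hS_ne.csSup_mem hS_fin)).mono
    fun n hn => ⟨f n, hn, rfl⟩ : ∃ᶠ n in atTop, ∃ x, G.priority x = sSup S ∧ f n = x)
  obtain ⟨_, hxk, -⟩ := hx.exists
  refine ⟨x, hxk, hx.mono fun _ h => h.2, ?_⟩
  refine (eventually_all.mpr fun y => ?_ :
    ∀ᶠ n in atTop, ∀ y, f n = y → G.priority y ≤ sSup S).mono fun n h => h (f n) rfl
  by_cases hy : G.priority y ≤ sSup S
  · exact Eventually.of_forall fun _ _ => hy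
  · have hyS : G.priority y ∉ S := fun h => hy (le_csSup hS_fin.bddAbove h)
    rw [hmem, not_frequently] at hyS
    exact hyS.mono fun n hn hfn => absurd (hfn ▸ rfl) hn

theorem maxInfPriority_comp_add (f : ℕ → Pos) (m : ℕ) :
    G.maxInfPriority (fun n => f (n + m)) = G.maxInfPriority f := by
  unfold maxInfPriority
  congr 1
  ext k
  simp only [Set.mem_ofPred_eq, ← Nat.frequently_atTop_iff_infinite]
  conv_rhs => rw [← map_add_atTop_eq_nat m, frequently_map]

theorem maxInfPriority_cycleSeq (q : Pos) (l : List Pos) :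
    G.maxInfPriority (cycleSeq q l) = (l.map G.priority).foldr max (G.priority q) := by
  have hmax : (l.map G.priority).foldr max (G.priority q) ∈ (q :: l).map G.priority :=
    List.foldr_max_mem_cons _ _
  obtain ⟨x, hx, hxM⟩ := List.mem_map.mp hmax
  refine G.maxInfPriority_eq_of_frequently_of_eventually
    ((frequently_cycleSeq_eq hx).mono fun n hn => hn ▸ hxM)
    (Eventually.of_forall fun n => List.le_foldr_max_of_mem_cons ?_)
  exact (List.mem_map_of_mem (cycleSeq_mem q l n) : _ ∈ (q :: l).map G.priority)

theorem exists_seq_maxInfPriority_eq_of_cycle {R : Pos → Pos → Prop} {p q : Pos} {l : List Pos}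
    (hreach : Relation.ReflTransGen R p q) (hcycle : List.IsChain R (q :: (l ++ [q]))) :
    ∃ f : ℕ → Pos, f 0 = p ∧ (∀ n, R (f n) (f (n + 1))) ∧
      G.maxInfPriority f = (l.map G.priority).foldr max (G.priority q) := by
  obtain ⟨m, f, hf0, hf, hfm⟩ :=
    hreach.exists_prepend_seq (cycleSeq_zero q l) (cycleSeq_rel hcycle)
  refine ⟨f, hf0, hf, ?_⟩
  rw [← G.maxInfPriority_comp_add f m, funext hfm, maxInfPriority_cycleSeq]

theorem exists_cycle_of_seq [Finite Pos] {R : Pos → Pos → Prop} {f : ℕ → Pos}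
    (hf : ∀ n, R (f n) (f (n + 1))) :
    ∃ (q : Pos) (l : List Pos), Relation.ReflTransGen R (f 0) q ∧
      List.IsChain R (q :: (l ++ [q])) ∧
      (l.map G.priority).foldr max (G.priority q) = G.maxInfPriority f := by
  obtain ⟨x, hxk, hx, hle⟩ := G.exists_frequently_eq_maxInfPriority f
  obtain ⟨N, hN⟩ := eventually_atTop.mp hle
  obtain ⟨a, haN, hxa⟩ := frequently_atTop.mp hx N
  obtain ⟨b, hab, hxb⟩ := frequently_atTop.mp hx (a + 1)
  obtain ⟨k, rfl⟩ := Nat.exists_eq_add_of_le hab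
  refine ⟨x, (List.range' (a + 1) k).map f, hxa ▸ reflTransGen_of_forall_rel_succ hf a, ?_, ?_⟩
  · have hchain := isChain_map_range' hf a (k + 2)
    rwa [List.range'_succ, List.range'_concat, List.map_cons, List.map_append, List.map_singleton,
      Nat.one_mul, hxa, hxb] at hchain
  · refine le_antisymm ?_ (hxk ▸ List.le_foldr_max_of_mem_cons List.mem_cons_self)
    refine List.foldr_max_le_iff.mpr fun y hy => ?_
    simp only [List.map_map, List.mem_cons, List.mem_map, List.mem_range'_1,
      Function.comp_apply] at hy
    rcases hy with rfl | ⟨j, ⟨hj, -⟩, rfl⟩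
    · exact hxk.le
    · exact hN j (by omega)

variable {G}

/-- The edge relation of the subgraph `G_σ`. -/
def Strategy.RestrictedEdge {i : Fin 2} (σ : G.Strategy i) (x y : Pos) : Prop :=
  G.edge x y ∧ (G.owner x = i → y = σ.move [] x)

theorem play_eq_of_forall_move {f : List Pos → Pos → Pos} {g : ℕ → Pos} {p : Pos} (h0 : g 0 = p)
    (hg : ∀ n, f ((List.range n).map g) (g n) = g (n + 1)) : play f p = g := by
  have hist : ∀ n, playHist f p n = (g n, (List.range n).map g) := by
    intro n
    induction n with
    | zero => simp [playHist, h0]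
    | succ n ih => simp [playHist, ih, hg, List.range_succ]
  exact funext fun n => congrArg Prod.fst (hist n)

variable (G) in
noncomputable def Strategy.ofSeq (j : Fin 2) (g : ℕ → Pos) : G.Strategy j where
  move h x := if G.edge x (g (h.length + 1)) then g (h.length + 1) else (G.total x).choose
  valid h x _ := by
    split_ifs with hx
    exacts [hx, (G.total x).choose_spec]

variable {i : Fin 2} {σ : G.Strategy i}

theorem play_combine_ofSeq (hσ : σ.Positional) {g : ℕ → Pos} {p : Pos} (h0 : g 0 = p)
    (hg : ∀ n, σ.RestrictedEdge (g n) (g (n + 1))) :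
    play (σ.combine (Strategy.ofSeq G (1 - i) g)) p = g := by
  refine play_eq_of_forall_move h0 fun n => ?_
  by_cases ho : G.owner (g n) = i
  · simp [Strategy.combine, ho, hσ _ [], (hg n).2 ho]
  · simp [Strategy.combine, ho, Strategy.ofSeq, (hg n).1]

theorem restrictedEdge_combine (hσ : σ.Positional) (τ : G.Strategy (1 - i)) (h : List Pos)
    (x : Pos) : σ.RestrictedEdge x (σ.combine τ h x) := by
  by_cases ho : G.owner x = i
  · simp only [Strategy.combine, if_pos ho]
    exact ⟨σ.valid h x ho, fun _ => hσ h [] x⟩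
  · simp only [Strategy.combine, if_neg ho]
    exact ⟨τ.valid h x (by fin_cases i <;> omega), fun ho' => absurd ho' ho⟩

theorem restrictedEdge_play_combine (hσ : σ.Positional) (τ : G.Strategy (1 - i)) (p : Pos)
    (n : ℕ) : σ.RestrictedEdge (play (σ.combine τ) p n) (play (σ.combine τ) p (n + 1)) :=
  restrictedEdge_combine hσ τ _ _

end ParityGame

/-- in a finite parity game, a positional strategy `σ` for player `i`
wins from `p` iff in the subgraph where player `i` moves only according to `σ`
there is no cycle reachable from `p` whose largest priority has parity `1 - i`. -/
theorem positional_winning_iff_no_bad_cycle {Pos : Type*} [Finite Pos]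
    (G : ParityGame Pos) (i : Fin 2) (σ : G.Strategy i) (hσ : σ.Positional) (p : Pos) :
    σ.WinsFrom p ↔
      ¬ ∃ (q : Pos) (l : List Pos),
        Relation.ReflTransGen (fun x y => G.edge x y ∧ (G.owner x = i → y = σ.move [] x)) p q ∧
        List.Chain (fun x y => G.edge x y ∧ (G.owner x = i → y = σ.move [] x)) q (l ++ [q]) ∧
        ((l.map G.priority).foldr max (G.priority q)) % 2 = ((1 - i : Fin 2) : ℕ) := by
  constructor
  · rintro hwin ⟨q, l, hreach, hcycle, hbad⟩
    obtain ⟨f, hf0, hf, hmax⟩ := G.exists_seq_maxInfPriority_eq_of_cycle hreach hcycle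
    have hwins := hwin (ParityGame.Strategy.ofSeq G (1 - i) f)
    rw [ParityGame.Strategy.WinsAgainst, ParityGame.WinsPlaySeq,
      ParityGame.play_combine_ofSeq hσ hf0 hf, hmax] at hwins
    exact (mod_two_eq_iff_ne_one_sub _ i).mp hwins hbad
  · intro hno τ
    obtain ⟨q, l, hreach, hcycle, hmax⟩ :=
      G.exists_cycle_of_seq (ParityGame.restrictedEdge_play_combine hσ τ p)
    rw [ParityGame.Strategy.WinsAgainst, ParityGame.WinsPlaySeq, ← hmax,
      mod_two_eq_iff_ne_one_sub]
    exact fun hbad => hno ⟨q, l, hreach, hcycle, hbad⟩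

end MuCalc
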